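/- Let D_0 be a fixed closed disk in the unit disk U centered at 0, and let D_1 be a closed disk in U intersecting D_0 with a fixed dihedral angle in [0, π/2]. Then the hyperbolic radius of D_1 (in the Poincaré metric on U) is a strictly increasing function of its euclidean radius, and for any real γ > 1 with γD_0, γD_1 ⊂ U, one has ρ_hyp(γD_1)/ρ_hyp(D_1) > ρ_hyp(γD_0)/ρ_hyp(D_0), where γD = {γz : z ∈ D}. -/

import Mathlib

/-!
A disk `closedBall c s` with real centre `c` meets the real axis in the diameter `[c - s, c + s]`,
and this diameter realises its hyperbolic diameter (a direct estimate of the pseudo-hyperbolic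
distance `|z - w| / |1 - z̄ w|` on the disk). Hence
`ρ_hyp = artanh (2 s / (1 - c² + s²)) = artanh (c + s) - artanh (c - s)`.
By the law of cosines `1 - c² + s² = 1 - r₀² - 2 r₀ s cos θ`, so `ρ_hyp(D₁)` increases
with `s`.

For the ratio, `q t = artanh (γ t) / artanh t` is strictly increasing: both functions vanish at
`0` and the ratio of their derivatives, `γ (1 - t²) / (1 - γ² t²)`, is increasing (the monotone
form of l'Hôpital's rule, via Cauchy's mean value theorem). With `a = c - s > 0` and
`b = c + s > r₀` this gives
`ρ(γD₁) / ρ(D₁) = (artanh (γ b) - artanh (γ a)) / (artanh b - artanh a) > q b`,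
since `q b` is a mediant of `q a` and that difference quotient, and
`q b > q r₀ = ρ(γD₀) / ρ(D₀)`.
-/

open Real Metric Pointwise

/-- The inverse hyperbolic tangent. -/
noncomputable def artanh (x : ℝ) : ℝ := Real.log ((1 + x) / (1 - x)) / 2

/-- The Poincaré (hyperbolic) distance between two points of the unit disk. -/
noncomputable def hdist (z w : ℂ) : ℝ :=
  2 * _root_.artanh ‖(z - w) / (1 - (starRingEnd ℂ) z * w)‖

/-- The hyperbolic radius of a disk contained in the unit disk, defined as half
of its hyperbolic diameter. -/
noncomputable def rhyp (D : Set ℂ) : ℝ :=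
  sSup {d | ∃ z ∈ D, ∃ w ∈ D, d = hdist z w} / 2

/-- The center distance of a disk of radius `s` meeting the disk `D₀` of radius
`r₀` centered at `0` with dihedral angle `θ`; we place the center on the
positive real axis. -/
noncomputable def cen (r₀ s θ : ℝ) : ℂ :=
  (Real.sqrt (r₀ ^ 2 + s ^ 2 + 2 * r₀ * s * Real.cos θ) : ℝ)

open Set ComplexConjugate

theorem mediant_mem_Ioo {a b c d : ℝ} (hb : 0 < b) (hd : 0 < d) (h : a / b < c / d) :
    (a + c) / (b + d) ∈ Ioo (a / b) (c / d) := by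
  rw [div_lt_div_iff₀ hb hd] at h
  constructor
  · rw [div_lt_div_iff₀ hb (by positivity)]; linarith
  · rw [div_lt_div_iff₀ (by positivity) hd]; linarith

theorem exists_ratio_slope_eq_ratio_deriv {f g f' g' : ℝ → ℝ} {a b : ℝ} (hab : a < b)
    (hf : ∀ t ∈ Icc a b, HasDerivAt f (f' t) t) (hg : ∀ t ∈ Icc a b, HasDerivAt g (g' t) t)
    (hg' : ∀ t ∈ Ioo a b, 0 < g' t) :
    ∃ ξ ∈ Ioo a b, (f b - f a) / (g b - g a) = f' ξ / g' ξ := by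
  have hcont : ∀ {φ φ' : ℝ → ℝ}, (∀ t ∈ Icc a b, HasDerivAt φ (φ' t) t) →
      ContinuousOn φ (Icc a b) :=
    fun hφ t ht => (hφ t ht).continuousAt.continuousWithinAt
  obtain ⟨ξ, hξ, hcauchy⟩ := exists_ratio_hasDerivAt_eq_ratio_slope f f' hab (hcont hf)
    (fun t ht => hf t (Ioo_subset_Icc_self ht)) g g' (hcont hg)
    (fun t ht => hg t (Ioo_subset_Icc_self ht))
  obtain ⟨η, hη, hgη⟩ := exists_hasDerivAt_eq_slope g g' hab (hcont hg)
    (fun t ht => hg t (Ioo_subset_Icc_self ht))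
  have hgab : 0 < g b - g a := by
    have := hg' η hη
    rw [hgη, lt_div_iff₀ (sub_pos.2 hab)] at this
    linarith
  refine ⟨ξ, hξ, ?_⟩
  rw [div_eq_div_iff hgab.ne' (hg' ξ hξ).ne']
  linarith

/-- The monotone form of l'Hôpital's rule: take `f a = g a = 0`. -/
theorem ratio_slope_lt_ratio_slope {f g f' g' : ℝ → ℝ} {a x y : ℝ} (hax : a < x)
    (hxy : x < y)
    (hf : ∀ t ∈ Icc a y, HasDerivAt f (f' t) t) (hg : ∀ t ∈ Icc a y, HasDerivAt g (g' t) t)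
    (hg' : ∀ t ∈ Ioo a y, 0 < g' t) (hmono : StrictMonoOn (fun t => f' t / g' t) (Ioo a y)) :
    (f x - f a) / (g x - g a) < (f y - f x) / (g y - g x) := by
  have hax' : Icc a x ⊆ Icc a y := Icc_subset_Icc_right hxy.le
  have hxy' : Icc x y ⊆ Icc a y := Icc_subset_Icc_left hax.le
  obtain ⟨η, hη, hη_eq⟩ := exists_ratio_slope_eq_ratio_deriv hax
    (fun t ht => hf t (hax' ht)) (fun t ht => hg t (hax' ht))
    (fun t ht => hg' t (Ioo_subset_Ioo_right hxy.le ht))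
  obtain ⟨ξ, hξ, hξ_eq⟩ := exists_ratio_slope_eq_ratio_deriv hxy
    (fun t ht => hf t (hxy' ht)) (fun t ht => hg t (hxy' ht))
    (fun t ht => hg' t (Ioo_subset_Ioo_left hax.le ht))
  rw [hη_eq, hξ_eq]
  exact hmono ⟨hη.1, hη.2.trans hxy⟩ ⟨hax.trans hξ.1, hξ.2⟩ (hη.2.trans hξ.1)

namespace Real

theorem artanh_neg_eq_neg (x : ℝ) : artanh (-x) = -artanh x := by
  rw [artanh, artanh, ← log_inv, ← sqrt_inv, inv_div]
  ring_nf

theorem artanh_sub_artanh {x y : ℝ} (hx : x ∈ Ioo (-1) 1) (hy : y ∈ Ioo (-1) 1) :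
    artanh y - artanh x = artanh ((y - x) / (1 - x * y)) := by
  obtain ⟨hx₁, hx₂⟩ := hx
  obtain ⟨hy₁, hy₂⟩ := hy
  have hxy : 0 < 1 - x * y := by nlinarith
  have hz : (y - x) / (1 - x * y) ∈ Icc (-1) 1 := by
    rw [mem_Icc, le_div_iff₀ hxy, div_le_iff₀ hxy]; constructor <;> nlinarith
  have hx' : 0 < (1 + x) / (1 - x) := div_pos (by linarith) (by linarith)
  have hy' : 0 < (1 + y) / (1 - y) := div_pos (by linarith) (by linarith)
  rw [artanh_eq_half_log hz, artanh_eq_half_log ⟨hy₁.le, hy₂.le⟩,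
    artanh_eq_half_log ⟨hx₁.le, hx₂.le⟩, ← mul_sub, ← log_div hy'.ne' hx'.ne']
  congr 2
  have h₁ : 1 - x * y ≠ 0 := hxy.ne'
  rw [one_add_div h₁, one_sub_div h₁, div_div_div_cancel_right₀ h₁, div_div_div_eq]
  congr 1 <;> ring

theorem hasDerivAt_artanh {x : ℝ} (hx : x ∈ Ioo (-1) 1) :
    HasDerivAt artanh (1 - x ^ 2)⁻¹ x := by
  have h₁ : 0 < 1 + x := by linarith [hx.1]
  have h₂ : 0 < 1 - x := by linarith [hx.2]
  have hq : HasDerivAt (fun y => (1 + y) / (1 - y)) (2 / (1 - x) ^ 2) x :=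
    (((hasDerivAt_id' x).const_add 1).div ((hasDerivAt_id' x).const_sub 1) h₂.ne').congr_deriv
      (by ring)
  have hlog : HasDerivAt (fun y => 1 / 2 * log ((1 + y) / (1 - y))) (1 - x ^ 2)⁻¹ x := by
    refine ((hq.log (div_pos h₁ h₂).ne').const_mul (1 / 2)).congr_deriv ?_
    have : 1 - x ^ 2 ≠ 0 := by nlinarith
    field_simp
    ring
  refine hlog.congr_of_eventuallyEq ?_
  filter_upwards [isOpen_Ioo.mem_nhds hx] with y hy
  exact artanh_eq_half_log ⟨hy.1.le, hy.2.le⟩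

theorem artanh_mul_div_artanh_lt_ratio_slope {γ x y : ℝ} (hγ : 1 < γ) (hx : 0 < x)
    (hxy : x < y) (hy : γ * y < 1) :
    artanh (γ * x) / artanh x < (artanh (γ * y) - artanh (γ * x)) / (artanh y - artanh x) := by
  have hγ₀ : 0 < γ := by linarith
  have hbound : ∀ t ∈ Icc 0 y, γ * t ∈ Ioo (-1) 1 ∧ t ∈ Ioo (-1) 1 :=
    fun t ⟨ht₀, hty⟩ => ⟨⟨by nlinarith, by nlinarith⟩, ⟨by linarith, by nlinarith⟩⟩
  have hf : ∀ t ∈ Icc 0 y,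
      HasDerivAt (fun t => artanh (γ * t)) (γ * (1 - (γ * t) ^ 2)⁻¹) t :=
    fun t ht => ((hasDerivAt_artanh (hbound t ht).1).comp t
      ((hasDerivAt_id t).const_mul γ)).congr_deriv (by ring)
  have hg : ∀ t ∈ Icc 0 y, HasDerivAt artanh (1 - t ^ 2)⁻¹ t :=
    fun t ht => hasDerivAt_artanh (hbound t ht).2
  have hsq : ∀ t ∈ Ioo 0 y, 0 < 1 - (γ * t) ^ 2 ∧ 0 < 1 - t ^ 2 := fun t ht => by
    obtain ⟨⟨h₁, h₂⟩, ⟨h₃, h₄⟩⟩ := hbound t (Ioo_subset_Icc_self ht)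
    constructor <;> nlinarith
  have hmono :
      StrictMonoOn (fun t => γ * (1 - (γ * t) ^ 2)⁻¹ / (1 - t ^ 2)⁻¹) (Ioo 0 y) := by
    intro s hs t ht hst
    simp only [div_inv_eq_mul, ← div_eq_mul_inv, div_mul_eq_mul_div]
    rw [div_lt_div_iff₀ (hsq s hs).1 (hsq t ht).1]
    have : 0 < (γ ^ 2 - 1) * (t ^ 2 - s ^ 2) := mul_pos (by nlinarith) (by nlinarith [hs.1])
    nlinarith [mul_pos hγ₀ this]
  simpa [artanh_zero] using
    ratio_slope_lt_ratio_slope hx hxy hf hg (fun t ht => inv_pos.2 (hsq t ht).2) hmono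

theorem artanh_mul_div_artanh_mem_Ioo {γ x y : ℝ} (hγ : 1 < γ) (hx : 0 < x) (hxy : x < y)
    (hy : γ * y < 1) :
    artanh (γ * y) / artanh y ∈
      Ioo (artanh (γ * x) / artanh x)
        ((artanh (γ * y) - artanh (γ * x)) / (artanh y - artanh x)) := by
  have hy₁ : y < 1 := by nlinarith
  have hpos : 0 < artanh x := artanh_pos ⟨hx, hxy.trans hy₁⟩
  have hinc : 0 < artanh y - artanh x := sub_pos.2 (artanh_lt_artanh (by linarith) hy₁ hxy)
  simpa using mediant_mem_Ioo hpos hinc (artanh_mul_div_artanh_lt_ratio_slope hγ hx hxy hy)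

end Real

theorem artanh_eq_real_artanh {x : ℝ} (hx : x ∈ Icc (-1) 1) :
    _root_.artanh x = Real.artanh x := by
  rw [_root_.artanh, Real.artanh_eq_half_log hx]; ring

theorem norm_one_sub_conj_mul_sq (z w : ℂ) :
    ‖1 - conj z * w‖ ^ 2 = ‖z - w‖ ^ 2 + (1 - ‖z‖ ^ 2) * (1 - ‖w‖ ^ 2) := by
  simp only [Complex.sq_norm, Complex.normSq_apply, Complex.sub_re, Complex.sub_im,
    Complex.mul_re, Complex.mul_im, Complex.one_re, Complex.one_im, Complex.conj_re,
    Complex.conj_im]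
  ring

theorem ofReal_mem_closedBall_ofReal {x c s : ℝ} :
    (x : ℂ) ∈ closedBall (c : ℂ) s ↔ |x - c| ≤ s := by
  rw [mem_closedBall, Complex.dist_eq, ← Complex.ofReal_sub, Complex.norm_real, Real.norm_eq_abs]

theorem sq_add_sq_le_of_mem_closedBall_ofReal {z : ℂ} {c s : ℝ}
    (hz : z ∈ closedBall (c : ℂ) s) :
    (z.re - c) ^ 2 + z.im ^ 2 ≤ s ^ 2 := by
  rw [mem_closedBall, Complex.dist_eq] at hz
  have h := pow_le_pow_left₀ (norm_nonneg _) hz 2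
  rwa [Complex.sq_norm, Complex.normSq_apply, Complex.sub_re, Complex.sub_im,
    Complex.ofReal_re, Complex.ofReal_im, sub_zero, ← sq, ← sq] at h

theorem abs_add_lt_one_of_closedBall_subset {c s : ℝ} (hs : 0 ≤ s)
    (h : closedBall (c : ℂ) s ⊆ ball 0 1) : |c| + s < 1 := by
  have hmem : ∀ x : ℝ, |x - c| ≤ s → |x| < 1 := fun x hx => by
    simpa [Complex.norm_real] using h (ofReal_mem_closedBall_ofReal.2 hx)
  have h₁ := hmem (c + s) (by simp [abs_of_nonneg hs])
  have h₂ := hmem (c - s) (by simp [abs_of_nonneg hs])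
  rw [abs_lt] at h₁ h₂
  cases abs_cases c <;> linarith

theorem two_mul_lt_one_sub_sq_add_sq {c s : ℝ} (hcs : |c| + s < 1) :
    2 * s < 1 - c ^ 2 + s ^ 2 := by
  nlinarith [sq_abs c, abs_nonneg c]

theorem norm_lt_one_of_mem_closedBall {z : ℂ} {c s : ℝ} (hcs : |c| + s < 1)
    (hz : z ∈ closedBall (c : ℂ) s) : ‖z‖ < 1 := by
  calc ‖z‖ ≤ ‖z - c‖ + ‖(c : ℂ)‖ := norm_le_norm_sub_add z c
    _ ≤ s + |c| := add_le_add (by rwa [← dist_eq_norm]) (Complex.norm_real c).le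
    _ < 1 := by linarith

/-- `(p, y)` and `(q, v)` are two points of the disk `closedBall c s`, written relative to its
centre; `1 - c² - s² - 2 c p` is a lower bound for `1 - |c + p + i y|²`. -/
theorem chord_sq_le {c s p q y v : ℝ} (hs : 0 ≤ s) (hcs : |c| + s ≤ 1)
    (hP : p ^ 2 + y ^ 2 ≤ s ^ 2) (hQ : q ^ 2 + v ^ 2 ≤ s ^ 2) :
    ((1 - c ^ 2 - s ^ 2) ^ 2 - 4 * c ^ 2 * s ^ 2) * ((p - q) ^ 2 + (y - v) ^ 2) ≤
      4 * s ^ 2 * (1 - c ^ 2 - s ^ 2 - 2 * c * p) * (1 - c ^ 2 - s ^ 2 - 2 * c * q) := by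
  generalize hX : 1 - c ^ 2 - s ^ 2 - 2 * c * s = X
  generalize hY : 1 - c ^ 2 - s ^ 2 + 2 * c * s = Y
  have hXY : 0 ≤ X * Y := by
    rw [← hX, ← hY, show (1 - c ^ 2 - s ^ 2 - 2 * c * s) * (1 - c ^ 2 - s ^ 2 + 2 * c * s) =
      (1 - (c + s) ^ 2) * (1 - (c - s) ^ 2) by ring]
    cases abs_cases c <;> apply mul_nonneg <;> nlinarith
  obtain ⟨hp₁, hp₂⟩ := abs_le_of_sq_le_sq' (by nlinarith : p ^ 2 ≤ s ^ 2) hs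
  obtain ⟨hq₁, hq₂⟩ := abs_le_of_sq_le_sq' (by nlinarith : q ^ 2 ≤ s ^ 2) hs
  -- AM-GM, using `y² ≤ s² - p²` and `v² ≤ s² - q²`
  have hamgm :
      -(2 * X * Y * y * v) ≤ X ^ 2 * ((s + p) * (s + q)) + Y ^ 2 * ((s - p) * (s - q)) := by
    set a := X ^ 2 * ((s + p) * (s + q))
    set b := Y ^ 2 * ((s - p) * (s - q))
    have ha : 0 ≤ a := mul_nonneg (sq_nonneg X) (mul_nonneg (by linarith) (by linarith))
    have hb : 0 ≤ b := mul_nonneg (sq_nonneg Y) (mul_nonneg (by linarith) (by linarith))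
    have hyv : y ^ 2 * v ^ 2 ≤ (s ^ 2 - p ^ 2) * (s ^ 2 - q ^ 2) :=
      mul_le_mul (by linarith) (by linarith) (sq_nonneg v) (by nlinarith)
    have : (2 * X * Y * y * v) ^ 2 ≤ 4 * a * b := by
      calc (2 * X * Y * y * v) ^ 2 = 4 * (X ^ 2 * Y ^ 2) * (y ^ 2 * v ^ 2) := by ring
        _ ≤ 4 * (X ^ 2 * Y ^ 2) * ((s ^ 2 - p ^ 2) * (s ^ 2 - q ^ 2)) := by gcongr
        _ = 4 * a * b := by ring
    nlinarith [sq_nonneg (a - b)]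
  -- `2 s (1 - c² - s² - 2 c p) = (s + p) X + (s - p) Y`
  have key : 4 * s ^ 2 * (1 - c ^ 2 - s ^ 2 - 2 * c * p) * (1 - c ^ 2 - s ^ 2 - 2 * c * q) -
      ((1 - c ^ 2 - s ^ 2) ^ 2 - 4 * c ^ 2 * s ^ 2) * ((p - q) ^ 2 + (y - v) ^ 2) =
      X ^ 2 * ((s + p) * (s + q)) + Y ^ 2 * ((s - p) * (s - q)) + 2 * X * Y * y * v +
        X * Y * ((s ^ 2 - p ^ 2 - y ^ 2) + (s ^ 2 - q ^ 2 - v ^ 2)) := by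
    rw [← hX, ← hY]; ring
  nlinarith [mul_nonneg hXY
    (by linarith : 0 ≤ (s ^ 2 - p ^ 2 - y ^ 2) + (s ^ 2 - q ^ 2 - v ^ 2))]

theorem sq_mul_norm_sub_sq_le {z w : ℂ} {c s : ℝ} (hs : 0 ≤ s) (hcs : |c| + s ≤ 1)
    (hz : z ∈ closedBall (c : ℂ) s) (hw : w ∈ closedBall (c : ℂ) s) :
    (1 - c ^ 2 + s ^ 2) ^ 2 * ‖z - w‖ ^ 2 ≤ 4 * s ^ 2 * ‖1 - conj z * w‖ ^ 2 := by
  have hz' := sq_add_sq_le_of_mem_closedBall_ofReal hz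
  have hw' := sq_add_sq_le_of_mem_closedBall_ofReal hw
  have hchord := chord_sq_le hs hcs hz' hw'
  have hN : 0 ≤ 1 - c ^ 2 - s ^ 2 - 2 * |c| * s := by nlinarith [sq_abs c, abs_nonneg c]
  have hlow : ∀ u : ℂ, (u.re - c) ^ 2 + u.im ^ 2 ≤ s ^ 2 →
      0 ≤ 1 - c ^ 2 - s ^ 2 - 2 * c * (u.re - c) ∧
        1 - c ^ 2 - s ^ 2 - 2 * c * (u.re - c) ≤ 1 - ‖u‖ ^ 2 := fun u hu => by
    have : |u.re - c| ≤ s := abs_le_of_sq_le_sq (by nlinarith [sq_nonneg u.im]) hs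
    have : c * (u.re - c) ≤ |c| * s := by
      calc c * (u.re - c) ≤ |c * (u.re - c)| := le_abs_self _
        _ ≤ |c| * s := by rw [abs_mul]; gcongr
    rw [Complex.sq_norm, Complex.normSq_apply]
    constructor <;> nlinarith
  obtain ⟨hz₁, hz₂⟩ := hlow z hz'
  obtain ⟨hw₁, hw₂⟩ := hlow w hw'
  have hsub : ‖z - w‖ ^ 2 = ((z.re - c) - (w.re - c)) ^ 2 + (z.im - w.im) ^ 2 := by
    rw [Complex.sq_norm, Complex.normSq_apply, Complex.sub_re, Complex.sub_im]; ring
  rw [norm_one_sub_conj_mul_sq, hsub]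
  nlinarith [mul_le_mul hz₂ hw₂ hw₁ (hz₁.trans hz₂)]

theorem norm_div_one_sub_conj_mul_le {z w : ℂ} {c s : ℝ} (hs : 0 ≤ s) (hcs : |c| + s < 1)
    (hz : z ∈ closedBall (c : ℂ) s) (hw : w ∈ closedBall (c : ℂ) s) :
    ‖(z - w) / (1 - conj z * w)‖ ≤ 2 * s / (1 - c ^ 2 + s ^ 2) := by
  have hD := two_mul_lt_one_sub_sq_add_sq hcs
  have hz₁ := norm_lt_one_of_mem_closedBall hcs hz
  have hw₁ := norm_lt_one_of_mem_closedBall hcs hw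
  have hden : 0 < ‖1 - conj z * w‖ := by
    have := norm_one_sub_conj_mul_sq z w
    have : 0 < (1 - ‖z‖ ^ 2) * (1 - ‖w‖ ^ 2) := by
      apply mul_pos <;> nlinarith [norm_nonneg z, norm_nonneg w]
    nlinarith [norm_nonneg (1 - conj z * w), sq_nonneg ‖z - w‖]
  rw [norm_div, div_le_div_iff₀ hden (by linarith), ← pow_le_pow_iff_left₀
    (mul_nonneg (norm_nonneg _) (by linarith)) (mul_nonneg (by linarith) (norm_nonneg _))
    two_ne_zero]
  calc (‖z - w‖ * (1 - c ^ 2 + s ^ 2)) ^ 2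
        = (1 - c ^ 2 + s ^ 2) ^ 2 * ‖z - w‖ ^ 2 := by ring
    _ ≤ 4 * s ^ 2 * ‖1 - conj z * w‖ ^ 2 := sq_mul_norm_sub_sq_le hs hcs.le hz hw
    _ = (2 * s * ‖1 - conj z * w‖) ^ 2 := by ring

theorem rhyp_closedBall_ofReal {c s : ℝ} (hs : 0 ≤ s) (hcs : |c| + s < 1) :
    rhyp (closedBall (c : ℂ) s) = Real.artanh (2 * s / (1 - c ^ 2 + s ^ 2)) := by
  have hD := two_mul_lt_one_sub_sq_add_sq hcs
  set K := 2 * s / (1 - c ^ 2 + s ^ 2) with hK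
  have hK₀ : 0 ≤ K := div_nonneg (by linarith) (by linarith)
  have hK₁ : K < 1 := (div_lt_one (by linarith)).2 hD
  have hmem : ((c - s : ℝ) : ℂ) ∈ closedBall (c : ℂ) s ∧
      ((c + s : ℝ) : ℂ) ∈ closedBall (c : ℂ) s := by
    simp [abs_of_nonneg hs]
  have hdiam : hdist ↑(c - s) ↑(c + s) = 2 * Real.artanh K := by
    have : ((↑(c - s) : ℂ) - ↑(c + s)) / (1 - conj ↑(c - s) * ↑(c + s)) = ↑(-K) := by
      rw [Complex.conj_ofReal,
        show -K = ((c - s) - (c + s)) / (1 - (c - s) * (c + s)) by rw [hK]; ring]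
      push_cast
      rfl
    rw [hdist, this, Complex.norm_real, norm_neg, Real.norm_of_nonneg hK₀,
      artanh_eq_real_artanh ⟨by linarith, hK₁.le⟩]
  have hbound : ∀ z ∈ closedBall (c : ℂ) s, ∀ w ∈ closedBall (c : ℂ) s,
      hdist z w ≤ 2 * Real.artanh K := fun z hz w hw => by
    have h := norm_div_one_sub_conj_mul_le hs hcs hz hw
    have h₀ := norm_nonneg ((z - w) / (1 - conj z * w))
    rw [hdist, artanh_eq_real_artanh ⟨by linarith, by linarith⟩]
    gcongr
    exact Real.artanh_le_artanh (by linarith) hK₁ h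
  have hgreat : IsGreatest
      {d | ∃ z ∈ closedBall (c : ℂ) s, ∃ w ∈ closedBall (c : ℂ) s, d = hdist z w}
      (2 * Real.artanh K) :=
    ⟨⟨_, hmem.1, _, hmem.2, hdiam.symm⟩, by
      rintro d ⟨z, hz, w, hw, rfl⟩
      exact hbound z hz w hw⟩
  rw [rhyp, hgreat.csSup_eq]
  ring

theorem rhyp_closedBall_ofReal_eq_sub {c s : ℝ} (hs : 0 ≤ s) (hcs : |c| + s < 1) :
    rhyp (closedBall (c : ℂ) s) = Real.artanh (c + s) - Real.artanh (c - s) := by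
  have hD := two_mul_lt_one_sub_sq_add_sq hcs
  rw [rhyp_closedBall_ofReal hs hcs, Real.artanh_sub_artanh]
  · congr 1
    rw [show 1 - (c - s) * (c + s) = 1 - c ^ 2 + s ^ 2 by ring]
    ring
  all_goals constructor <;> cases abs_cases c <;> linarith

theorem rhyp_closedBall_zero {r : ℝ} (hr₀ : 0 ≤ r) (hr₁ : r < 1) :
    rhyp (closedBall 0 r) = 2 * Real.artanh r := by
  have := rhyp_closedBall_ofReal_eq_sub (c := 0) hr₀ (by simpa using hr₁)
  rw [Complex.ofReal_zero] at this
  rw [this, zero_add, zero_sub, Real.artanh_neg_eq_neg]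
  ring

theorem smul_closedBall_ofReal {γ : ℝ} (hγ : 0 ≤ γ) (c : ℝ) {s : ℝ} (hs : 0 ≤ s) :
    γ • closedBall (c : ℂ) s = closedBall ↑(γ * c) (γ * s) := by
  rw [smul_closedBall _ _ hs, Real.norm_of_nonneg hγ, Complex.real_smul, Complex.ofReal_mul]

theorem sq_sqrt_law_of_cosines (r s θ : ℝ) :
    √(r ^ 2 + s ^ 2 + 2 * r * s * cos θ) ^ 2 = r ^ 2 + s ^ 2 + 2 * r * s * cos θ :=
  sq_sqrt (by nlinarith [sq_nonneg (r + s * cos θ), sq_nonneg (s * sin θ), sin_sq_add_cos_sq θ])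

theorem rhyp_closedBall_cen {r₀ s θ : ℝ} (hs : 0 ≤ s)
    (h : closedBall (cen r₀ s θ) s ⊆ ball 0 1) :
    rhyp (closedBall (cen r₀ s θ) s) =
      Real.artanh (2 * s / (1 - r₀ ^ 2 - 2 * r₀ * s * cos θ)) := by
  rw [cen, rhyp_closedBall_ofReal hs (abs_add_lt_one_of_closedBall_subset hs h),
    sq_sqrt_law_of_cosines]
  ring_nf

theorem two_mul_lt_of_closedBall_cen_subset {r₀ s θ : ℝ} (hs : 0 ≤ s)
    (h : closedBall (cen r₀ s θ) s ⊆ ball 0 1) :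
    2 * s < 1 - r₀ ^ 2 - 2 * r₀ * s * cos θ := by
  have := two_mul_lt_one_sub_sq_add_sq (abs_add_lt_one_of_closedBall_subset hs h)
  rw [sq_sqrt_law_of_cosines] at this
  linarith

theorem rhyp_closedBall_cen_lt_of_lt {r₀ θ s t : ℝ} (hr₀ : 0 ≤ r₀) (hcos : 0 ≤ cos θ)
    (hs : 0 ≤ s) (hst : s < t) (hDs : closedBall (cen r₀ s θ) s ⊆ ball 0 1)
    (hDt : closedBall (cen r₀ t θ) t ⊆ ball 0 1) :
    rhyp (closedBall (cen r₀ s θ) s) < rhyp (closedBall (cen r₀ t θ) t) := by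
  have ht : 0 ≤ t := hs.trans hst.le
  have hKs := two_mul_lt_of_closedBall_cen_subset hs hDs
  have hKt := two_mul_lt_of_closedBall_cen_subset ht hDt
  rw [rhyp_closedBall_cen hs hDs, rhyp_closedBall_cen ht hDt]
  have hKs₀ : 0 ≤ 2 * s / (1 - r₀ ^ 2 - 2 * r₀ * s * cos θ) :=
    div_nonneg (by linarith) (by linarith)
  refine Real.artanh_lt_artanh (by linarith) ((div_lt_one (by linarith)).2 hKt) ?_
  have hr₀₁ : 0 < 1 - r₀ ^ 2 := by nlinarith [mul_nonneg (mul_nonneg hr₀ ht) hcos]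
  rw [div_lt_div_iff₀ (by linarith) (by linarith)]
  nlinarith [mul_pos (sub_pos.2 hst) hr₀₁]

theorem rhyp_smul_closedBall_zero_div_lt {γ r c s : ℝ} (hγ : 1 < γ) (hr : 0 < r) (hs : 0 < s)
    (hsc : s < c) (hrc : r < c + s) (hγcs : γ * (c + s) < 1) :
    rhyp (γ • closedBall (0 : ℂ) r) / rhyp (closedBall (0 : ℂ) r) <
      rhyp (γ • closedBall (c : ℂ) s) / rhyp (closedBall (c : ℂ) s) := by
  have hγ₀ : 0 < γ := by linarith
  have hγr : γ * r < 1 := by nlinarith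
  have hγD : |γ * c| + γ * s < 1 := by
    rw [abs_of_nonneg (by nlinarith)]; linarith [mul_add γ c s]
  have hD : |c| + s < 1 := by rw [abs_of_nonneg (by linarith)]; nlinarith
  rw [smul_closedBall _ _ hr.le, smul_zero, Real.norm_of_nonneg hγ₀.le,
    smul_closedBall_ofReal hγ₀.le c hs.le, rhyp_closedBall_zero (by positivity) hγr,
    rhyp_closedBall_zero hr.le (by nlinarith), rhyp_closedBall_ofReal_eq_sub (by positivity) hγD,
    rhyp_closedBall_ofReal_eq_sub hs.le hD,
    mul_div_mul_left _ _ two_ne_zero, ← mul_add, ← mul_sub]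
  exact (artanh_mul_div_artanh_mem_Ioo hγ hr hrc hγcs).1.trans
    (artanh_mul_div_artanh_mem_Ioo hγ (sub_pos.2 hsc) (by linarith) hγcs).2

theorem stmt12_general (r₀ θ : ℝ) (hr₀ : 0 < r₀) (hθ : θ ∈ Set.Icc 0 (π / 2)) :
    (∀ s t : ℝ, 0 < s → s < t →
      closedBall (cen r₀ s θ) s ⊆ ball (0 : ℂ) 1 →
      closedBall (cen r₀ t θ) t ⊆ ball (0 : ℂ) 1 →
      rhyp (closedBall (cen r₀ s θ) s) < rhyp (closedBall (cen r₀ t θ) t)) ∧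
    (∀ γ s : ℝ, 1 < γ → 0 < s →
      closedBall (cen r₀ s θ) s ⊆ ball (0 : ℂ) 1 →
      γ • closedBall (cen r₀ s θ) s ⊆ ball (0 : ℂ) 1 →
      γ • closedBall (0 : ℂ) r₀ ⊆ ball (0 : ℂ) 1 →
      rhyp (γ • closedBall (0 : ℂ) r₀) / rhyp (closedBall (0 : ℂ) r₀) <
        rhyp (γ • closedBall (cen r₀ s θ) s) / rhyp (closedBall (cen r₀ s θ) s)) := by
  have hcos : 0 ≤ cos θ := cos_nonneg_of_mem_Icc ⟨by linarith [hθ.1, pi_pos], hθ.2⟩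
  refine ⟨fun s t hs hst => rhyp_closedBall_cen_lt_of_lt hr₀.le hcos hs.le hst, ?_⟩
  intro γ s hγ hs _ hγD _
  have hcross : 0 ≤ r₀ * s * cos θ := mul_nonneg (mul_nonneg hr₀.le hs.le) hcos
  have hsc : s < √(r₀ ^ 2 + s ^ 2 + 2 * r₀ * s * cos θ) := (lt_sqrt hs.le).2 (by nlinarith)
  have hr₀c : r₀ < √(r₀ ^ 2 + s ^ 2 + 2 * r₀ * s * cos θ) :=
    (lt_sqrt hr₀.le).2 (by nlinarith)
  rw [cen, smul_closedBall_ofReal (by linarith) _ hs.le] at hγD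
  have hγcs := abs_add_lt_one_of_closedBall_subset (by nlinarith) hγD
  rw [abs_of_nonneg (by nlinarith)] at hγcs
  exact rhyp_smul_closedBall_zero_div_lt hγ hr₀ hs hsc (by linarith) (by linarith)

/-- For a disk `D₁ ⊂ U` meeting the fixed disk `D₀ = closedBall 0 r₀` at a fixed
dihedral angle `θ ∈ [0, π/2]`, the hyperbolic radius of `D₁` is strictly
increasing in its euclidean radius; moreover for `γ > 1`,
`ρ_hyp(γD₁)/ρ_hyp(D₁) > ρ_hyp(γD₀)/ρ_hyp(D₀)` whenever the scaled disks stay in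
`U`. -/
theorem stmt12 (r₀ θ : ℝ) (hr₀ : 0 < r₀) (hr₁ : r₀ < 1) (hθ : θ ∈ Set.Icc 0 (π / 2)) :
    (∀ s t : ℝ, 0 < s → s < t →
      closedBall (cen r₀ s θ) s ⊆ ball (0 : ℂ) 1 →
      closedBall (cen r₀ t θ) t ⊆ ball (0 : ℂ) 1 →
      rhyp (closedBall (cen r₀ s θ) s) < rhyp (closedBall (cen r₀ t θ) t)) ∧
    (∀ γ s : ℝ, 1 < γ → 0 < s →
      closedBall (cen r₀ s θ) s ⊆ ball (0 : ℂ) 1 →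
      γ • closedBall (cen r₀ s θ) s ⊆ ball (0 : ℂ) 1 →
      γ • closedBall (0 : ℂ) r₀ ⊆ ball (0 : ℂ) 1 →
      rhyp (γ • closedBall (0 : ℂ) r₀) / rhyp (closedBall (0 : ℂ) r₀) <
        rhyp (γ • closedBall (cen r₀ s θ) s) / rhyp (closedBall (cen r₀ s θ) s)) :=
  stmt12_general r₀ θ hr₀ hθ
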